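/- Let X₁, …, X_N be independent random variables and Z = f(X₁, …, X_N) with E[Z²] < ∞. Define V₊ = Σ_{n=1}^N E'[(Z − Z'_n)₊²] where Z'_n is obtained by replacing X_n with an independent copy X'_n and E' is expectation over the copies only. Then Var(Z) ≤ E[V₊] + E[V₋] where V₋ = Σ_n E'[(Z − Z'_n)₋²]; in particular Var(Z) ≤ Σ_n E[(Z − Z'_n)²] (the Efron–Stein inequality). -/

import Mathlib

/-!
Transport everything to the product space `Fin N → 𝒳` carrying the product of the laws `μₙ`
of the `Xₙ`. Integrating `f` over the coordinates `≥ n` gives the Doob martingale `Eₙ f` of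
`f` along the coordinate filtration, so `f - E f = ∑ₙ (Eₙ₊₁ f - Eₙ f)` is a sum of orthogonal
increments. The increment `Eₙ₊₁ f - Eₙ f` is the average over a second sample `y` of
`f (z) - f (z with coordinate n replaced by yₙ)`, where `z` takes its first `n + 1` coordinates
from `x` and the others from `y`; by Jensen its second moment is at most that of
`f (z) - f (update z n yₙ)`, and swapping the coordinates `> n` of `x` and `y` shows that
`(z, yₙ)` has law `(⊗ μ) ⊗ μₙ`. The bound through positive and negative parts is then the
identity `(a⁺)² + (a⁻)² = a²`.
-/

open MeasureTheory ProbabilityTheory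

section Jensen

variable {α β : Type*} [MeasurableSpace α] [MeasurableSpace β] {μ : Measure α} {ν : Measure β}

theorem sq_integral_le_integral_sq [IsProbabilityMeasure μ] {g : α → ℝ} (hg : MemLp g 2 μ) :
    (∫ x, g x ∂μ) ^ 2 ≤ ∫ x, g x ^ 2 ∂μ := by
  have h := variance_nonneg g μ
  rw [variance_eq_sub hg] at h
  simpa using h

variable [SFinite μ] [SFinite ν] [IsProbabilityMeasure ν] {F : α × β → ℝ}

theorem MeasureTheory.MemLp.ae_sq_integral_le_integral_sq (hF : MemLp F 2 (μ.prod ν)) :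
    ∀ᵐ x ∂μ, (∫ y, F (x, y) ∂ν) ^ 2 ≤ ∫ y, F (x, y) ^ 2 ∂ν := by
  filter_upwards [hF.aestronglyMeasurable.prodMk_left, hF.integrable_sq.prod_right_ae]
    with x hmeas hint
  exact sq_integral_le_integral_sq ((memLp_two_iff_integrable_sq hmeas).2 hint)

theorem MeasureTheory.MemLp.integral_prod_left (hF : MemLp F 2 (μ.prod ν)) :
    MemLp (fun x => ∫ y, F (x, y) ∂ν) 2 μ := by
  have hmeas := hF.aestronglyMeasurable.integral_prod_right'
  refine (memLp_two_iff_integrable_sq hmeas).2 <|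
    hF.integrable_sq.integral_prod_left.mono' (hmeas.pow 2) ?_
  filter_upwards [hF.ae_sq_integral_le_integral_sq] with x hx
  rwa [Real.norm_of_nonneg (sq_nonneg _)]

theorem MeasureTheory.MemLp.integral_sq_integral_le (hF : MemLp F 2 (μ.prod ν)) :
    ∫ x, (∫ y, F (x, y) ∂ν) ^ 2 ∂μ ≤ ∫ p, F p ^ 2 ∂(μ.prod ν) := by
  rw [integral_prod _ hF.integrable_sq]
  exact integral_mono_ae hF.integral_prod_left.integrable_sq
    hF.integrable_sq.integral_prod_left hF.ae_sq_integral_le_integral_sq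

end Jensen

section Piecewise

variable {ι 𝒳 : Type*} [Fintype ι] [DecidableEq ι] [MeasurableSpace 𝒳] (μ : ι → Measure 𝒳)
  (s : Finset ι)

theorem measurePreserving_piecewise_swap [∀ i, SigmaFinite (μ i)] :
    MeasurePreserving (fun p : (ι → 𝒳) × (ι → 𝒳) => (s.piecewise p.1 p.2, s.piecewise p.2 p.1))
      ((Measure.pi μ).prod (Measure.pi μ)) ((Measure.pi μ).prod (Measure.pi μ)) := by
  let g : ι → 𝒳 × 𝒳 → 𝒳 × 𝒳 := fun i => if i ∈ s then id else Prod.swap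
  have hg : ∀ i, MeasurePreserving (g i) ((μ i).prod (μ i)) ((μ i).prod (μ i)) := by
    intro i
    by_cases hi : i ∈ s
    · simpa [g, hi] using MeasurePreserving.id _
    · simpa [g, hi] using Measure.measurePreserving_swap
  have e := measurePreserving_arrowProdEquivProdArrow 𝒳 𝒳 ι μ μ
  convert e.comp ((measurePreserving_pi _ _ hg).comp (e.symm _)) using 1
  ext p i <;> by_cases hi : i ∈ s <;>
    simp [g, hi, MeasurableEquiv.arrowProdEquivProdArrow, Equiv.arrowProdEquivProdArrow]

theorem measurePreserving_piecewise [∀ i, IsProbabilityMeasure (μ i)] :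
    MeasurePreserving (fun p : (ι → 𝒳) × (ι → 𝒳) => s.piecewise p.1 p.2)
      ((Measure.pi μ).prod (Measure.pi μ)) (Measure.pi μ) :=
  measurePreserving_fst.comp (measurePreserving_piecewise_swap μ s)

end Piecewise

theorem MeasureTheory.MeasurePreserving.integral_comp_of_aestronglyMeasurable
    {α β E : Type*} [MeasurableSpace α] [MeasurableSpace β] [NormedAddCommGroup E]
    [NormedSpace ℝ E] {μ : Measure α} {ν : Measure β} {φ : α → β} (hφ : MeasurePreserving φ μ ν)
    {g : β → E} (hg : AEStronglyMeasurable g ν) :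
    ∫ x, g (φ x) ∂μ = ∫ y, g y ∂ν := by
  rw [← hφ.map_eq] at hg ⊢
  exact (integral_map hφ.aemeasurable hg).symm

theorem integral_sq_sum_of_orthogonal {α ι : Type*} [MeasurableSpace α] {μ : Measure α}
    (s : Finset ι) {g : ι → α → ℝ} (hg : ∀ i ∈ s, MemLp (g i) 2 μ)
    (horth : ∀ i ∈ s, ∀ j ∈ s, i ≠ j → ∫ x, g i x * g j x ∂μ = 0) :
    ∫ x, (∑ i ∈ s, g i x) ^ 2 ∂μ = ∑ i ∈ s, ∫ x, g i x ^ 2 ∂μ := by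
  have hint : ∀ i ∈ s, ∀ j ∈ s, Integrable (fun x => g i x * g j x) μ :=
    fun i hi j hj => (hg i hi).integrable_mul (hg j hj)
  simp_rw [sq, Finset.sum_mul_sum]
  rw [integral_finsetSum _ fun i hi => integrable_finsetSum _ (hint i hi)]
  refine Finset.sum_congr rfl fun i hi => ?_
  rw [integral_finsetSum _ (hint i hi),
    Finset.sum_eq_single_of_mem i hi fun j hj hji => horth i hi j hj hji.symm]

section CoordCondExp

variable {ι 𝒳 : Type*} [Fintype ι] [DecidableEq ι] [MeasurableSpace 𝒳] (μ : ι → Measure 𝒳)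
  {f g : (ι → 𝒳) → ℝ}

/-- A version of the conditional expectation of `f` given the coordinates in `s`. -/
noncomputable def coordCondExp (s : Finset ι) (f : (ι → 𝒳) → ℝ) (x : ι → 𝒳) : ℝ :=
  ∫ y, f (s.piecewise x y) ∂(Measure.pi μ)

theorem coordCondExp_empty (x : ι → 𝒳) : coordCondExp μ ∅ f x = ∫ y, f y ∂(Measure.pi μ) := by
  simp [coordCondExp]

theorem coordCondExp_piecewise {s t : Finset ι} (hts : t ⊆ s) (x y : ι → 𝒳) :
    coordCondExp μ t f (s.piecewise x y) = coordCondExp μ t f x := by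
  simp only [coordCondExp, Finset.piecewise_piecewise_of_subset_left hts]

variable [∀ i, IsProbabilityMeasure (μ i)]

theorem coordCondExp_univ : coordCondExp μ Finset.univ f = f := by
  funext x
  simp [coordCondExp]

theorem memLp_coordCondExp (hf : MemLp f 2 (Measure.pi μ)) (s : Finset ι) :
    MemLp (coordCondExp μ s f) 2 (Measure.pi μ) :=
  (hf.comp_measurePreserving (measurePreserving_piecewise μ s)).integral_prod_left

theorem integral_mul_coordCondExp {s t : Finset ι} (hst : s ⊆ t) (hf : MemLp f 2 (Measure.pi μ))
    (hg : MemLp g 2 (Measure.pi μ)) (hgs : ∀ x y, g (s.piecewise x y) = g x) :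
    ∫ x, g x * coordCondExp μ t f x ∂(Measure.pi μ) = ∫ x, g x * f x ∂(Measure.pi μ) := by
  have hpw := measurePreserving_piecewise μ t
  have hgt : ∀ x y, g (t.piecewise x y) = g x := fun x y => by
    rw [← hgs (t.piecewise x y) y, Finset.piecewise_piecewise_of_subset_left hst, hgs]
  have hint : Integrable (fun p : (ι → 𝒳) × (ι → 𝒳) => g p.1 * f (t.piecewise p.1 p.2))
      ((Measure.pi μ).prod (Measure.pi μ)) :=
    (hg.comp_measurePreserving measurePreserving_fst).integrable_mul
      (hf.comp_measurePreserving hpw)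
  calc ∫ x, g x * coordCondExp μ t f x ∂(Measure.pi μ)
      = ∫ p, g p.1 * f (t.piecewise p.1 p.2) ∂((Measure.pi μ).prod (Measure.pi μ)) := by
        simp only [coordCondExp, ← integral_const_mul]
        exact (integral_prod _ hint).symm
    _ = ∫ p, (g * f) (t.piecewise p.1 p.2) ∂((Measure.pi μ).prod (Measure.pi μ)) := by
        simp only [Pi.mul_apply, hgt]
    _ = ∫ x, g x * f x ∂(Measure.pi μ) :=
        hpw.integral_comp_of_aestronglyMeasurable (hg.integrable_mul hf).aestronglyMeasurable

theorem integral_sq_coordCondExp_insert_sub_le (hf : Measurable f)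
    (hf2 : MemLp f 2 (Measure.pi μ)) {s : Finset ι} {k : ι} (hk : k ∉ s) :
    ∫ x, (coordCondExp μ (insert k s) f x - coordCondExp μ s f x) ^ 2 ∂(Measure.pi μ)
      ≤ ∫ q, (f q.1 - f (Function.update q.1 k q.2)) ^ 2 ∂((Measure.pi μ).prod (μ k)) := by
  have hF₁ := hf2.comp_measurePreserving (measurePreserving_piecewise μ (insert k s))
  have hF₀ := hf2.comp_measurePreserving (measurePreserving_piecewise μ s)
  have hslice : ∀ᵐ x ∂(Measure.pi μ), coordCondExp μ (insert k s) f x - coordCondExp μ s f x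
      = ∫ y, (f ((insert k s).piecewise x y) - f (s.piecewise x y)) ∂(Measure.pi μ) := by
    filter_upwards [(hF₁.integrable one_le_two).prod_right_ae,
      (hF₀.integrable one_le_two).prod_right_ae] with x h₁ h₀
    exact (integral_sub h₁ h₀).symm
  have hΦ := (MeasurePreserving.id (Measure.pi μ)).prod (measurePreserving_eval μ k)
    |>.comp (measurePreserving_piecewise_swap μ (insert k s))
  calc ∫ x, (coordCondExp μ (insert k s) f x - coordCondExp μ s f x) ^ 2 ∂(Measure.pi μ)
      = ∫ x, (∫ y, (f ((insert k s).piecewise x y) - f (s.piecewise x y)) ∂(Measure.pi μ)) ^ 2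
          ∂(Measure.pi μ) := by
        refine integral_congr_ae ?_
        filter_upwards [hslice] with x hx
        rw [hx]
    _ ≤ ∫ p, (f ((insert k s).piecewise p.1 p.2) - f (s.piecewise p.1 p.2)) ^ 2
          ∂((Measure.pi μ).prod (Measure.pi μ)) := (hF₁.sub hF₀).integral_sq_integral_le
    _ = ∫ q, (f q.1 - f (Function.update q.1 k q.2)) ^ 2 ∂((Measure.pi μ).prod (μ k)) := by
        rw [← hΦ.integral_comp_of_aestronglyMeasurable (by fun_prop)]
        congr with p
        have hupd : Function.update (s.piecewise p.1 p.2) k (p.2 k) = s.piecewise p.1 p.2 := by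
          rw [Function.update_eq_self_iff, Finset.piecewise_eq_of_notMem _ _ _ hk]
        simp [Finset.piecewise_insert, hupd]

theorem integral_mul_coordCondExp_sub_eq_zero {s t u : Finset ι} (hst : s ⊆ t) (hsu : s ⊆ u)
    (hf : MemLp f 2 (Measure.pi μ)) (hg : MemLp g 2 (Measure.pi μ))
    (hgs : ∀ x y, g (s.piecewise x y) = g x) :
    ∫ x, g x * (coordCondExp μ u f x - coordCondExp μ t f x) ∂(Measure.pi μ) = 0 := by
  have hu : Integrable (fun x => g x * coordCondExp μ u f x) (Measure.pi μ) :=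
    hg.integrable_mul (memLp_coordCondExp μ hf u)
  have ht : Integrable (fun x => g x * coordCondExp μ t f x) (Measure.pi μ) :=
    hg.integrable_mul (memLp_coordCondExp μ hf t)
  simp only [mul_sub]
  rw [integral_sub hu ht, integral_mul_coordCondExp μ hsu hf hg hgs,
    integral_mul_coordCondExp μ hst hf hg hgs, sub_self]

end CoordCondExp

theorem integral_sq_sub_integral_le_sum_pi {N : ℕ} {𝒳 : Type*} [MeasurableSpace 𝒳]
    (μ : Fin N → Measure 𝒳) [∀ i, IsProbabilityMeasure (μ i)] {f : (Fin N → 𝒳) → ℝ}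
    (hf : Measurable f) (hf2 : MemLp f 2 (Measure.pi μ)) :
    ∫ x, (f x - ∫ y, f y ∂(Measure.pi μ)) ^ 2 ∂(Measure.pi μ)
      ≤ ∑ k, ∫ q, (f q.1 - f (Function.update q.1 k q.2)) ^ 2 ∂((Measure.pi μ).prod (μ k)) := by
  let S : ℕ → Finset (Fin N) := fun n => {i | (i : ℕ) < n}
  have hS_mono : Monotone S := fun m n hmn i => by
    simp only [S, Finset.mem_filter, Finset.mem_univ, true_and]
    omega
  let Δ : ℕ → (Fin N → 𝒳) → ℝ := fun n x =>
    coordCondExp μ (S (n + 1)) f x - coordCondExp μ (S n) f x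
  have hΔ : ∀ n, MemLp (Δ n) 2 (Measure.pi μ) := fun n =>
    (memLp_coordCondExp μ hf2 _).sub (memLp_coordCondExp μ hf2 _)
  have horth : ∀ m n, m < n → ∫ x, Δ m x * Δ n x ∂(Measure.pi μ) = 0 := fun m n hmn =>
    integral_mul_coordCondExp_sub_eq_zero μ (hS_mono hmn) (hS_mono (by omega)) hf2 (hΔ m)
      fun x y => by
        simp only [Δ, coordCondExp_piecewise μ (hS_mono m.le_succ),
          coordCondExp_piecewise μ le_rfl]
  have htelescope : ∀ x, f x - ∫ y, f y ∂(Measure.pi μ) = ∑ n ∈ Finset.range N, Δ n x := by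
    intro x
    rw [Finset.sum_range_sub (fun n => coordCondExp μ (S n) f x)]
    have hN : S N = Finset.univ := by ext i; simp [S]
    have h0 : S 0 = ∅ := by ext i; simp [S]
    rw [hN, h0, coordCondExp_univ, coordCondExp_empty]
  calc ∫ x, (f x - ∫ y, f y ∂(Measure.pi μ)) ^ 2 ∂(Measure.pi μ)
      = ∫ x, (∑ n ∈ Finset.range N, Δ n x) ^ 2 ∂(Measure.pi μ) := by simp_rw [htelescope]
    _ = ∑ n ∈ Finset.range N, ∫ x, Δ n x ^ 2 ∂(Measure.pi μ) :=
        integral_sq_sum_of_orthogonal _ (fun n _ => hΔ n) fun m _ n _ hmn =>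
          hmn.lt_or_gt.elim (horth m n) fun h => by simpa only [mul_comm] using horth n m h
    _ = ∑ k : Fin N, ∫ x, Δ k x ^ 2 ∂(Measure.pi μ) := (Fin.sum_univ_eq_sum_range _ N).symm
    _ ≤ _ := by
        refine Finset.sum_le_sum fun k _ => ?_
        have hk : S (k + 1) = insert k (S k) := by ext i; simp [S, Fin.ext_iff]; omega
        simp only [Δ, hk]
        exact integral_sq_coordCondExp_insert_sub_le μ hf hf2 (by simp [S])

theorem sup_zero_sq_add_neg_sup_zero_sq (a : ℝ) : (a ⊔ 0) ^ 2 + (-a ⊔ 0) ^ 2 = a ^ 2 := by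
  rcases le_total a 0 with h | h <;> simp [h]

section PositiveNegativeParts

variable {α β ι : Type*} [MeasurableSpace α] [MeasurableSpace β] {μ : Measure α} {ν : Measure β}
  [SFinite μ] [SFinite ν]

theorem integral_sum_integral_eq_sum_integral_prod (s : Finset ι) {F : ι → α × β → ℝ}
    (hF : ∀ i ∈ s, Integrable (F i) (μ.prod ν)) :
    ∫ x, ∑ i ∈ s, ∫ y, F i (x, y) ∂ν ∂μ = ∑ i ∈ s, ∫ p, F i p ∂(μ.prod ν) := by
  rw [integral_finsetSum _ fun i hi => (hF i hi).integral_prod_left]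
  exact Finset.sum_congr rfl fun i hi => (integral_prod _ (hF i hi)).symm

theorem integral_sum_integral_sup_zero_sq_add (s : Finset ι) {D : ι → α × β → ℝ}
    (hD : ∀ i ∈ s, AEStronglyMeasurable (D i) (μ.prod ν))
    (hD2 : ∀ i ∈ s, Integrable (fun p => D i p ^ 2) (μ.prod ν)) :
    (∫ x, ∑ i ∈ s, ∫ y, (D i (x, y) ⊔ 0) ^ 2 ∂ν ∂μ)
        + ∫ x, ∑ i ∈ s, ∫ y, (-D i (x, y) ⊔ 0) ^ 2 ∂ν ∂μ
      = ∑ i ∈ s, ∫ p, D i p ^ 2 ∂(μ.prod ν) := by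
  have hpos : ∀ i ∈ s, Integrable (fun p => (D i p ⊔ 0) ^ 2) (μ.prod ν) := fun i hi =>
    (hD2 i hi).mono' (((hD i hi).sup aestronglyMeasurable_const).pow 2) <| ae_of_all _ fun p => by
      have := sup_zero_sq_add_neg_sup_zero_sq (D i p)
      rw [Real.norm_of_nonneg (sq_nonneg _)]
      nlinarith [sq_nonneg (-D i p ⊔ 0)]
  have hneg : ∀ i ∈ s, Integrable (fun p => (-D i p ⊔ 0) ^ 2) (μ.prod ν) := fun i hi =>
    (hD2 i hi).mono' (((hD i hi).neg.sup aestronglyMeasurable_const).pow 2) <|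
      ae_of_all _ fun p => by
      have := sup_zero_sq_add_neg_sup_zero_sq (D i p)
      rw [Real.norm_of_nonneg (sq_nonneg _)]
      nlinarith [sq_nonneg (D i p ⊔ 0)]
  rw [integral_sum_integral_eq_sum_integral_prod s hpos,
    integral_sum_integral_eq_sum_integral_prod s hneg, ← Finset.sum_add_distrib]
  refine Finset.sum_congr rfl fun i hi => ?_
  rw [← integral_add (hpos i hi) (hneg i hi)]
  simp only [sup_zero_sq_add_neg_sup_zero_sq]

end PositiveNegativeParts

theorem integral_sq_sub_integral_le_sum_of_iIndepFun {Ω Ω' 𝒳 : Type*} [MeasurableSpace Ω]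
    [MeasurableSpace Ω'] [MeasurableSpace 𝒳] {P : Measure Ω} {P' : Measure Ω'}
    [IsProbabilityMeasure P] [SFinite P'] {N : ℕ}
    {X : Fin N → Ω → 𝒳} {X' : Fin N → Ω' → 𝒳} (hX : ∀ n, Measurable (X n))
    (hX' : ∀ n, Measurable (X' n)) (hindep : iIndepFun X P)
    (hcopy : ∀ n, P.map (X n) = P'.map (X' n)) {f : (Fin N → 𝒳) → ℝ} (hf : Measurable f)
    (hsq : Integrable (fun ω => f (fun n => X n ω) ^ 2) P) :
    ∫ ω, (f (fun n => X n ω) - ∫ ω₂, f (fun n => X n ω₂) ∂P) ^ 2 ∂P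
      ≤ ∑ n, ∫ p : Ω × Ω', (f (fun m => X m p.1)
          - f (Function.update (fun m => X m p.1) n (X' n p.2))) ^ 2 ∂(P.prod P') := by
  let μ := fun n => P.map (X n)
  have : ∀ n, IsProbabilityMeasure (μ n) := fun n =>
    Measure.isProbabilityMeasure_map (hX n).aemeasurable
  have hmap : MeasurePreserving (fun ω n => X n ω) P (Measure.pi μ) :=
    ⟨measurable_pi_lambda _ hX, hindep.map_fun_eq_pi_map fun n => (hX n).aemeasurable⟩
  have hpair : ∀ n, MeasurePreserving (Prod.map (fun ω m => X m ω) (X' n)) (P.prod P')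
      ((Measure.pi μ).prod (μ n)) := fun n => hmap.prod ⟨hX' n, (hcopy n).symm⟩
  have hf2 : MemLp f 2 (Measure.pi μ) := (memLp_two_iff_integrable_sq hf.aestronglyMeasurable).2 <|
    (hmap.integrable_comp (hf.pow_const 2).aestronglyMeasurable).1 hsq
  calc ∫ ω, (f (fun n => X n ω) - ∫ ω₂, f (fun n => X n ω₂) ∂P) ^ 2 ∂P
      = ∫ x, (f x - ∫ y, f y ∂(Measure.pi μ)) ^ 2 ∂(Measure.pi μ) := by
        rw [hmap.integral_comp_of_aestronglyMeasurable hf.aestronglyMeasurable]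
        exact hmap.integral_comp_of_aestronglyMeasurable
          (g := fun x => (f x - ∫ y, f y ∂(Measure.pi μ)) ^ 2) (by fun_prop)
    _ ≤ ∑ n, ∫ q, (f q.1 - f (Function.update q.1 n q.2)) ^ 2 ∂((Measure.pi μ).prod (μ n)) :=
        integral_sq_sub_integral_le_sum_pi μ hf hf2
    _ = _ := Finset.sum_congr rfl fun n _ =>
        ((hpair n).integral_comp_of_aestronglyMeasurable (by fun_prop)).symm

theorem stmt9_general {Ω Ω' : Type*} [MeasurableSpace Ω] [MeasurableSpace Ω']
    (P : Measure Ω) (P' : Measure Ω')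
    [IsProbabilityMeasure P] [IsProbabilityMeasure P']
    {𝒳 : Type*} [MeasurableSpace 𝒳] (N : ℕ)
    (X : Fin N → Ω → 𝒳) (X' : Fin N → Ω' → 𝒳)
    (hX : ∀ n, Measurable (X n)) (hX' : ∀ n, Measurable (X' n))
    (hindep : iIndepFun X P)
    (hcopy : ∀ n, Measure.map (X n) P = Measure.map (X' n) P')
    (f : (Fin N → 𝒳) → ℝ) (hf : Measurable f)
    (hsq : Integrable (fun ω => (f (fun n => X n ω)) ^ 2) P)
    (hsq' : ∀ n, Integrable
      (fun p : Ω × Ω' =>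
        (f (fun m => X m p.1) - f (Function.update (fun m => X m p.1) n (X' n p.2))) ^ 2)
      (P.prod P')) :
    (∫ ω, (f (fun n => X n ω) - ∫ ω₂, f (fun n => X n ω₂) ∂P) ^ 2 ∂P
        ≤ (∫ ω, ∑ n, ∫ ω', ((f (fun m => X m ω)
              - f (Function.update (fun m => X m ω) n (X' n ω'))) ⊔ 0) ^ 2 ∂P' ∂P)
          + ∫ ω, ∑ n, ∫ ω', ((f (Function.update (fun m => X m ω) n (X' n ω'))
              - f (fun m => X m ω)) ⊔ 0) ^ 2 ∂P' ∂P) ∧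
      ∫ ω, (f (fun n => X n ω) - ∫ ω₂, f (fun n => X n ω₂) ∂P) ^ 2 ∂P
        ≤ ∑ n, ∫ p : Ω × Ω',
            (f (fun m => X m p.1)
              - f (Function.update (fun m => X m p.1) n (X' n p.2))) ^ 2 ∂(P.prod P') := by
  have hvar := integral_sq_sub_integral_le_sum_of_iIndepFun hX hX' hindep hcopy hf hsq
  have hparts := integral_sum_integral_sup_zero_sq_add Finset.univ
    (fun n _ => (by fun_prop : Measurable fun p : Ω × Ω' => f (fun m => X m p.1)
      - f (Function.update (fun m => X m p.1) n (X' n p.2))).aestronglyMeasurable)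
    (fun n _ => hsq' n)
  simp only [neg_sub] at hparts
  exact ⟨hvar.trans_eq hparts.symm, hvar⟩

/-- The Efron–Stein inequality: for `Z = f(X₁,…,X_N)` with independent `X_n` and
independent copies `X'_n`,
`Var(Z) ≤ E[V₊] + E[V₋]` and `Var(Z) ≤ Σₙ E[(Z − Z'ₙ)²]`, where
`V₊ = Σₙ E'[(Z − Z'ₙ)₊²]`, `V₋ = Σₙ E'[(Z − Z'ₙ)₋²]`. -/
theorem stmt9 {Ω Ω' : Type*} [MeasurableSpace Ω] [MeasurableSpace Ω']
    (P : Measure Ω) (P' : Measure Ω')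
    [IsProbabilityMeasure P] [IsProbabilityMeasure P']
    {𝒳 : Type*} [MeasurableSpace 𝒳] (N : ℕ)
    (X : Fin N → Ω → 𝒳) (X' : Fin N → Ω' → 𝒳)
    (hX : ∀ n, Measurable (X n)) (hX' : ∀ n, Measurable (X' n))
    (hindep : iIndepFun X P)
    (hindep' : iIndepFun X' P')
    (hcopy : ∀ n, Measure.map (X n) P = Measure.map (X' n) P')
    (f : (Fin N → 𝒳) → ℝ) (hf : Measurable f)
    (hsq : Integrable (fun ω => (f (fun n => X n ω)) ^ 2) P)
    (hsq' : ∀ n, Integrable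
      (fun p : Ω × Ω' =>
        (f (fun m => X m p.1) - f (Function.update (fun m => X m p.1) n (X' n p.2))) ^ 2)
      (P.prod P')) :
    (∫ ω, (f (fun n => X n ω) - ∫ ω₂, f (fun n => X n ω₂) ∂P) ^ 2 ∂P
        ≤ (∫ ω, ∑ n, ∫ ω', ((f (fun m => X m ω)
              - f (Function.update (fun m => X m ω) n (X' n ω'))) ⊔ 0) ^ 2 ∂P' ∂P)
          + ∫ ω, ∑ n, ∫ ω', ((f (Function.update (fun m => X m ω) n (X' n ω'))
              - f (fun m => X m ω)) ⊔ 0) ^ 2 ∂P' ∂P) ∧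
      ∫ ω, (f (fun n => X n ω) - ∫ ω₂, f (fun n => X n ω₂) ∂P) ^ 2 ∂P
        ≤ ∑ n, ∫ p : Ω × Ω',
            (f (fun m => X m p.1)
              - f (Function.update (fun m => X m p.1) n (X' n p.2))) ^ 2 ∂(P.prod P') :=
  stmt9_general P P' N X X' hX hX' hindep hcopy f hf hsq hsq'
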